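/- arXiv:0706.3560 — 3 statements merged into one kernel-verified Lean document; each statement's English description precedes it below -/
import Mathlib

section
/- For reparametrizations φ, ψ : I → I, there exists an increasing self-homeomorphism ρ of I with ψ = φ ∘ ρ if and only if C_φ = C_ψ. Together with the fact that every countable subset of I is realized as a stop value set, this shows that the assignment φ ↦ C_φ induces an order-preserving bijection from the quotient Rep₊(I)/Homeo₊(I) (reparametrizations up to right composition with increasing homeomorphisms, ordered by right divisibility) onto the set of countable subsets of I ordered by inclusion. -/
/-!
The fibres of a reparametrization `φ` are closed intervals
`φ ⁻¹' {c} = [fiberMin φ c, fiberMax φ c]`, and `c` is a stop value exactly when its fibre is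
nondegenerate. Right composition with a reparametrization can only create stop values, and
right composition with a strictly increasing one creates none. Conversely, if every stop value
of `φ` is one of `ψ`, mapping each fibre of `ψ` affinely onto the fibre of `φ` over the same
value gives a monotone surjection `η`, hence a reparametrization, with `φ ∘ η = ψ`; it is
strictly increasing when the two stop value sets agree.

For a countable `C`, pick a nonnegative summable `w` with support `C`. The map
`stepLeft w : c ↦ (c + ∑_{x < c} w x) / (1 + ∑ w)` is strictly increasing, with right limit
`stepRight w c` at `c`, so it jumps exactly at the points of `C`. Its generalized inverse
`staircase w` is a reparametrization taking the value `c` on `[stepLeft w c, stepRight w c]`,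
and on nothing more since `stepLeft w` is left continuous; both limits come from dominated
convergence.
-/

open unitInterval

def IsRepar (φ : I → I) : Prop :=
  Continuous φ ∧ Monotone φ ∧ φ 0 = 0 ∧ φ 1 = 1

def ConstOn {X : Type*} (p : I → X) (a b : I) : Prop :=
  ∀ s ∈ Set.Icc a b, ∀ t ∈ Set.Icc a b, p s = p t

def IsStopInterval {X : Type*} (p : I → X) (a b : I) : Prop :=
  a < b ∧ ConstOn p a b ∧
    ∀ a' b' : I, a' ≤ a → b ≤ b' → ConstOn p a' b' → a' = a ∧ b' = b

def StopValues {X : Type*} (p : I → X) : Set X :=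
  {c | ∃ a b : I, IsStopInterval p a b ∧ p a = c}

open Set Filter Topology Function

noncomputable def fiberMin (φ : I → I) (c : I) : I := sInf (φ ⁻¹' {c})

noncomputable def fiberMax (φ : I → I) (c : I) : I := sSup (φ ⁻¹' {c})

namespace IsRepar

variable {φ η : I → I}

theorem of_monotone_surjective (hm : Monotone φ) (hs : Surjective φ) : IsRepar φ := by
  obtain ⟨s, hs0⟩ := hs 0
  obtain ⟨t, ht1⟩ := hs 1
  exact ⟨hm.continuous_of_surjective hs, hm,
    le_antisymm ((hm nonneg').trans_eq hs0) nonneg',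
    le_antisymm le_one' (ht1.symm.trans_le (hm le_one'))⟩

theorem surjective (hφ : IsRepar φ) : Surjective φ := by
  intro c
  have := intermediate_value_Icc (zero_le_one' I) hφ.1.continuousOn
  rw [hφ.2.2.1, hφ.2.2.2] at this
  obtain ⟨t, -, ht⟩ := this ⟨nonneg', le_one'⟩
  exact ⟨t, ht⟩

theorem comp (hφ : IsRepar φ) (hη : IsRepar η) : IsRepar (φ ∘ η) :=
  of_monotone_surjective (hφ.2.1.comp hη.2.1) (hφ.surjective.comp hη.surjective)

theorem apply_fiberMin (hφ : IsRepar φ) (c : I) : φ (fiberMin φ c) = c :=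
  (isClosed_singleton.preimage hφ.1).sInf_mem (hφ.surjective c)

theorem apply_fiberMax (hφ : IsRepar φ) (c : I) : φ (fiberMax φ c) = c :=
  (isClosed_singleton.preimage hφ.1).sSup_mem (hφ.surjective c)

theorem preimage_singleton (hφ : IsRepar φ) (c : I) :
    φ ⁻¹' {c} = Icc (fiberMin φ c) (fiberMax φ c) := by
  ext x
  refine ⟨fun hx => ⟨sInf_le hx, le_sSup hx⟩, fun hx => ?_⟩
  exact le_antisymm (hφ.apply_fiberMax c ▸ hφ.2.1 hx.2) (hφ.apply_fiberMin c ▸ hφ.2.1 hx.1)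

theorem mem_Icc_fiberMin_fiberMax (hφ : IsRepar φ) (t : I) :
    t ∈ Icc (fiberMin φ (φ t)) (fiberMax φ (φ t)) := by
  rw [← hφ.preimage_singleton]; rfl

theorem fiberMin_le_fiberMax (hφ : IsRepar φ) (c : I) : fiberMin φ c ≤ fiberMax φ c :=
  sInf_le (hφ.apply_fiberMax c)

theorem fiberMax_lt_fiberMin (hφ : IsRepar φ) {c c' : I} (h : c < c') :
    fiberMax φ c < fiberMin φ c' := by
  by_contra! hle
  simpa [hφ.apply_fiberMin, hφ.apply_fiberMax, not_le.2 h] using hφ.2.1 hle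

theorem isStopInterval_fiberMin_fiberMax (hφ : IsRepar φ) {c : I}
    (hlt : fiberMin φ c < fiberMax φ c) : IsStopInterval φ (fiberMin φ c) (fiberMax φ c) := by
  have hconst : ConstOn φ (fiberMin φ c) (fiberMax φ c) := fun s hs t ht => by
    rw [← hφ.preimage_singleton] at hs ht
    rw [hs, ht]
  refine ⟨hlt, hconst, fun a' b' ha' hb' hK => ?_⟩
  have hab' : a' ≤ b' := ha'.trans (hlt.le.trans hb')
  have ha'c : φ a' = c := (hK a' ⟨le_rfl, hab'⟩ _ ⟨ha', hlt.le.trans hb'⟩).trans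
    (hφ.apply_fiberMin c)
  have hb'c : φ b' = c := (hK b' ⟨hab', le_rfl⟩ _ ⟨ha'.trans hlt.le, hb'⟩).trans
    (hφ.apply_fiberMax c)
  exact ⟨le_antisymm ha' (sInf_le ha'c), le_antisymm (le_sSup hb'c) hb'⟩

theorem mem_stopValues_iff (hφ : IsRepar φ) {c : I} :
    c ∈ StopValues φ ↔ fiberMin φ c < fiberMax φ c := by
  refine ⟨?_, fun hlt =>
    ⟨_, _, hφ.isStopInterval_fiberMin_fiberMax hlt, hφ.apply_fiberMin c⟩⟩
  rintro ⟨a, b, ⟨hab, hconst, -⟩, rfl⟩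
  have ha : a ∈ φ ⁻¹' {φ a} := rfl
  have hb : b ∈ φ ⁻¹' {φ a} := hconst b ⟨hab.le, le_rfl⟩ a ⟨le_rfl, hab.le⟩
  rw [hφ.preimage_singleton] at ha hb
  exact ha.1.trans_lt (hab.trans_le hb.2)

theorem mem_stopValues_iff_exists (hφ : IsRepar φ) {c : I} :
    c ∈ StopValues φ ↔ ∃ s t, s < t ∧ φ s = c ∧ φ t = c := by
  rw [hφ.mem_stopValues_iff]
  refine ⟨fun h => ⟨_, _, h, hφ.apply_fiberMin c, hφ.apply_fiberMax c⟩, ?_⟩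
  rintro ⟨s, t, hst, hs, ht⟩
  exact (sInf_le (show s ∈ φ ⁻¹' {c} from hs)).trans_lt
    (hst.trans_le (le_sSup (show t ∈ φ ⁻¹' {c} from ht)))

end IsRepar

theorem stopValues_subset_stopValues_comp {φ η : I → I} (hφ : IsRepar φ) (hη : IsRepar η) :
    StopValues φ ⊆ StopValues (φ ∘ η) := by
  intro c hc
  obtain ⟨s, t, hst, hs, ht⟩ := hφ.mem_stopValues_iff_exists.1 hc
  obtain ⟨s', rfl⟩ := hη.surjective s
  obtain ⟨t', rfl⟩ := hη.surjective t
  exact (hφ.comp hη).mem_stopValues_iff_exists.2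
    ⟨s', t', hη.2.1.reflect_lt hst, hs, ht⟩

theorem stopValues_comp_subset_of_strictMono {φ ρ : I → I} (hφ : IsRepar φ) (hρ : IsRepar ρ)
    (hρ' : StrictMono ρ) : StopValues (φ ∘ ρ) ⊆ StopValues φ := by
  intro c hc
  obtain ⟨s, t, hst, hs, ht⟩ := (hφ.comp hρ).mem_stopValues_iff_exists.1 hc
  exact hφ.mem_stopValues_iff_exists.2 ⟨ρ s, ρ t, hρ' hst, hs, ht⟩

-- For `u = v` the division by zero makes this the constant `a`.
noncomputable def rescale (u v a b t : I) : I :=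
  projIcc 0 1 zero_le_one (a + (t - u) / (v - u) * (b - a))

section Rescale

variable {u v a b : I}

theorem rescale_left : rescale u v a b u = a := by
  simp [rescale]

theorem rescale_right (hab : a ≤ b) (h : a < b → u < v) : rescale u v a b v = b := by
  rcases hab.lt_or_eq with hab | rfl
  · have : (v - u : ℝ) ≠ 0 := sub_ne_zero.2 (Subtype.coe_injective.ne (h hab).ne')
    simp [rescale, div_self this]
  · simp [rescale]

theorem continuous_rescale : Continuous (rescale u v a b) :=
  continuous_projIcc.comp (by fun_prop)

theorem monotone_rescale (huv : u ≤ v) (hab : a ≤ b) : Monotone (rescale u v a b) := by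
  refine (monotone_projIcc _).comp fun s t hst => ?_
  have : ((s : ℝ) - u) / (v - u) ≤ (t - u) / (v - u) :=
    div_le_div_of_nonneg_right (sub_le_sub_right (Subtype.coe_le_coe.2 hst) _)
      (sub_nonneg.2 huv)
  gcongr
  exact sub_nonneg.2 hab

theorem coe_rescale (hab : a ≤ b) {t : I} (ht : t ∈ Icc u v) :
    (rescale u v a b t : ℝ) = a + (t - u) / (v - u) * (b - a) := by
  have hr0 : 0 ≤ ((t : ℝ) - u) / (v - u) :=
    div_nonneg (sub_nonneg.2 ht.1) (sub_nonneg.2 (ht.1.trans ht.2))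
  have hr1 : ((t : ℝ) - u) / (v - u) ≤ 1 :=
    div_le_one_of_le₀ (sub_le_sub_right (Subtype.coe_le_coe.2 ht.2) _)
      (sub_nonneg.2 (ht.1.trans ht.2))
  have hba : (0 : ℝ) ≤ b - a := sub_nonneg.2 hab
  rw [rescale, projIcc_of_mem]
  constructor <;> nlinarith [a.2.1, b.2.2, mul_nonneg hr0 hba, mul_le_of_le_one_left hba hr1]

theorem strictMonoOn_rescale (huv : u < v) (hab : a < b) :
    StrictMonoOn (rescale u v a b) (Icc u v) := by
  intro s hs t ht hst
  rw [← Subtype.coe_lt_coe, coe_rescale hab.le hs, coe_rescale hab.le ht]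
  have : ((s : ℝ) - u) / (v - u) < (t - u) / (v - u) :=
    div_lt_div_of_pos_right (sub_lt_sub_right (Subtype.coe_lt_coe.2 hst) _)
      (sub_pos.2 huv)
  gcongr
  exact sub_pos.2 hab

theorem mapsTo_rescale (huv : u ≤ v) (hab : a ≤ b) (h : a < b → u < v) :
    MapsTo (rescale u v a b) (Icc u v) (Icc a b) := fun _ ht =>
  ⟨rescale_left.symm.trans_le (monotone_rescale huv hab ht.1),
    (monotone_rescale huv hab ht.2).trans_eq (rescale_right hab h)⟩

theorem surjOn_rescale (huv : u ≤ v) (hab : a ≤ b) (h : a < b → u < v) :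
    SurjOn (rescale u v a b) (Icc u v) (Icc a b) := by
  have := intermediate_value_Icc huv
    (continuous_rescale (u := u) (v := v) (a := a) (b := b)).continuousOn
  rwa [rescale_left, rescale_right hab h] at this

end Rescale

noncomputable def fiberwiseRescale (φ ψ : I → I) (t : I) : I :=
  rescale (fiberMin ψ (ψ t)) (fiberMax ψ (ψ t)) (fiberMin φ (ψ t)) (fiberMax φ (ψ t)) t

section FiberwiseRescale

variable {φ ψ : I → I}

theorem fiberMin_lt_fiberMax_of_stopValues_subset (hφ : IsRepar φ) (hψ : IsRepar ψ)
    (hsub : StopValues φ ⊆ StopValues ψ) (c : I) :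
    fiberMin φ c < fiberMax φ c → fiberMin ψ c < fiberMax ψ c := by
  simpa only [← hφ.mem_stopValues_iff, ← hψ.mem_stopValues_iff] using @hsub c

theorem fiberwiseRescale_mem_Icc (hφ : IsRepar φ) (hψ : IsRepar ψ)
    (hsub : StopValues φ ⊆ StopValues ψ) (t : I) :
    fiberwiseRescale φ ψ t ∈ Icc (fiberMin φ (ψ t)) (fiberMax φ (ψ t)) :=
  mapsTo_rescale (hψ.fiberMin_le_fiberMax _) (hφ.fiberMin_le_fiberMax _)
    (fiberMin_lt_fiberMax_of_stopValues_subset hφ hψ hsub _) (hψ.mem_Icc_fiberMin_fiberMax t)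

theorem comp_fiberwiseRescale (hφ : IsRepar φ) (hψ : IsRepar ψ)
    (hsub : StopValues φ ⊆ StopValues ψ) : φ ∘ fiberwiseRescale φ ψ = ψ :=
  funext fun t => by
    simpa [← hφ.preimage_singleton] using fiberwiseRescale_mem_Icc hφ hψ hsub t

theorem monotone_fiberwiseRescale (hφ : IsRepar φ) (hψ : IsRepar ψ)
    (hsub : StopValues φ ⊆ StopValues ψ) : Monotone (fiberwiseRescale φ ψ) := by
  intro s t hst
  rcases (hψ.2.1 hst).lt_or_eq with hlt | heq
  · exact (fiberwiseRescale_mem_Icc hφ hψ hsub s).2.trans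
      ((hφ.fiberMax_lt_fiberMin hlt).le.trans (fiberwiseRescale_mem_Icc hφ hψ hsub t).1)
  · rw [fiberwiseRescale, fiberwiseRescale, heq]
    exact monotone_rescale (hψ.fiberMin_le_fiberMax _) (hφ.fiberMin_le_fiberMax _) hst

theorem surjective_fiberwiseRescale (hφ : IsRepar φ) (hψ : IsRepar ψ)
    (hsub : StopValues φ ⊆ StopValues ψ) : Surjective (fiberwiseRescale φ ψ) := by
  intro x
  obtain ⟨t, ht, htx⟩ := surjOn_rescale (hψ.fiberMin_le_fiberMax _)
    (hφ.fiberMin_le_fiberMax _) (fiberMin_lt_fiberMax_of_stopValues_subset hφ hψ hsub _)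
    (hφ.mem_Icc_fiberMin_fiberMax x)
  have hψt : ψ t = φ x := by
    rwa [← mem_singleton_iff, ← mem_preimage, hψ.preimage_singleton]
  exact ⟨t, by rwa [fiberwiseRescale, hψt]⟩

theorem isRepar_fiberwiseRescale (hφ : IsRepar φ) (hψ : IsRepar ψ)
    (hsub : StopValues φ ⊆ StopValues ψ) : IsRepar (fiberwiseRescale φ ψ) :=
  .of_monotone_surjective (monotone_fiberwiseRescale hφ hψ hsub)
    (surjective_fiberwiseRescale hφ hψ hsub)

theorem strictMono_fiberwiseRescale (hφ : IsRepar φ) (hψ : IsRepar ψ)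
    (h : StopValues φ = StopValues ψ) : StrictMono (fiberwiseRescale φ ψ) := by
  intro s t hst
  rcases (hψ.2.1 hst.le).lt_or_eq with hlt | heq
  · refine (monotone_fiberwiseRescale hφ hψ h.le hst.le).lt_of_ne fun he => hlt.ne ?_
    rw [← comp_fiberwiseRescale hφ hψ h.le, comp_apply, comp_apply, he]
  · have hc : ψ t ∈ StopValues φ :=
      h ▸ hψ.mem_stopValues_iff_exists.2 ⟨s, t, hst, heq, rfl⟩
    have hφc := hφ.mem_stopValues_iff.1 hc
    have hs := hψ.mem_Icc_fiberMin_fiberMax s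
    rw [fiberwiseRescale, fiberwiseRescale, heq]
    rw [heq] at hs
    exact strictMonoOn_rescale
      (fiberMin_lt_fiberMax_of_stopValues_subset hφ hψ h.le _ hφc) hφc hs
      (hψ.mem_Icc_fiberMin_fiberMax t) hst

end FiberwiseRescale

noncomputable def mass {α : Type*} (w : α → ℝ) (s : Set α) : ℝ := ∑' x, s.indicator w x

section Mass

variable {α : Type*} {w : α → ℝ}

theorem mass_nonneg (hw0 : 0 ≤ w) (s : Set α) : 0 ≤ mass w s :=
  tsum_nonneg (indicator_nonneg fun x _ => hw0 x)

theorem mass_mono (hw0 : 0 ≤ w) (hw : Summable w) {s t : Set α} (h : s ⊆ t) :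
    mass w s ≤ mass w t :=
  (hw.indicator s).tsum_le_tsum (indicator_le_indicator_of_subset h hw0) (hw.indicator t)

theorem mass_lt_mass (hw0 : 0 ≤ w) (hw : Summable w) {s t : Set α} (h : s ⊆ t) {x : α}
    (hxt : x ∈ t) (hxs : x ∉ s) (hx : 0 < w x) : mass w s < mass w t :=
  (hw.indicator s).tsum_lt_tsum (i := x) (indicator_le_indicator_of_subset h hw0)
    (by simpa [indicator_of_mem hxt, indicator_of_notMem hxs] using hx) (hw.indicator t)

theorem mass_Iio_eq_mass_Iic [PartialOrder α] {c : α} (hc : w c = 0) :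
    mass w (Iio c) = mass w (Iic c) := by
  refine tsum_congr fun x => ?_
  rcases eq_or_ne x c with rfl | hx
  · simp [hc]
  · classical simp [indicator_apply, le_iff_lt_or_eq, hx]

theorem tendsto_mass (hw : Summable w) {ι : Type*} {l : Filter ι} {s : ι → Set α} {t : Set α}
    (h : ∀ x, ∀ᶠ a in l, (x ∈ s a ↔ x ∈ t)) :
    Tendsto (fun a => mass w (s a)) l (𝓝 (mass w t)) :=
  tendsto_tsum_of_dominated_convergence hw.abs
    (fun x => tendsto_const_nhds.congr' <| (h x).mono fun a hx => by
      classical simp only [indicator_apply, hx])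
    (.of_forall fun a x => norm_indicator_le_norm_self w x)

end Mass

noncomputable def stepLeft (w : I → ℝ) (c : I) : ℝ :=
  (c + mass w (Iio c)) / (1 + mass w univ)

noncomputable def stepRight (w : I → ℝ) (c : I) : ℝ :=
  (c + mass w (Iic c)) / (1 + mass w univ)

noncomputable def staircase (w : I → ℝ) (t : I) : I := sSup {c | stepLeft w c ≤ t}

section Staircase

variable {w : I → ℝ}

theorem stepLeft_le_stepRight (hw0 : 0 ≤ w) (hw : Summable w) (c : I) :
    stepLeft w c ≤ stepRight w c := by
  have := mass_mono hw0 hw (Iio_subset_Iic_self (a := c))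
  unfold stepLeft stepRight
  gcongr
  linarith [mass_nonneg hw0 univ]

theorem stepRight_lt_stepLeft (hw0 : 0 ≤ w) (hw : Summable w) {c c' : I} (h : c < c') :
    stepRight w c < stepLeft w c' := by
  have := mass_mono hw0 hw (Iic_subset_Iio.2 h)
  have h' : (c : ℝ) < c' := h
  unfold stepLeft stepRight
  exact div_lt_div_of_pos_right (add_lt_add_of_lt_of_le h' this)
    (by linarith [mass_nonneg hw0 univ])

theorem stepLeft_lt_stepRight_iff (hw0 : 0 ≤ w) (hw : Summable w) {c : I} :
    stepLeft w c < stepRight w c ↔ c ∈ support w := by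
  refine ⟨fun h hc => h.ne (by rw [stepLeft, stepRight, mass_Iio_eq_mass_Iic hc]), fun hc => ?_⟩
  have := mass_lt_mass hw0 hw Iio_subset_Iic_self (mem_Iic.2 le_rfl) (lt_irrefl c)
    ((hw0 c).lt_of_ne' hc)
  unfold stepLeft stepRight
  gcongr
  linarith [mass_nonneg hw0 univ]

theorem stepLeft_nonneg (hw0 : 0 ≤ w) (c : I) : 0 ≤ stepLeft w c :=
  div_nonneg (add_nonneg c.2.1 (mass_nonneg hw0 _)) (by linarith [mass_nonneg hw0 univ])

theorem stepRight_le_one (hw0 : 0 ≤ w) (hw : Summable w) (c : I) : stepRight w c ≤ 1 :=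
  div_le_one_of_le₀ (add_le_add c.2.2 (mass_mono hw0 hw (subset_univ _)))
    (by linarith [mass_nonneg hw0 univ])

theorem stepLeft_zero : stepLeft w 0 = 0 := by
  have : Iio (0 : I) = ∅ := Iio_eq_empty_iff.2 isMin_bot
  simp [stepLeft, this, mass]

theorem stepRight_one (hw0 : 0 ≤ w) : stepRight w 1 = 1 := by
  have : Iic (1 : I) = univ := eq_univ_of_forall fun _ => le_one'
  rw [stepRight, this, Icc.coe_one, div_self]
  linarith [mass_nonneg hw0 univ]

theorem tendsto_stepLeft_nhdsLT (hw : Summable w) (c : I) :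
    Tendsto (stepLeft w) (𝓝[<] c) (𝓝 (stepLeft w c)) := by
  refine ((continuous_subtype_val.tendsto c).mono_left nhdsWithin_le_nhds |>.add
    (tendsto_mass hw fun x => ?_)).div_const _
  by_cases hx : x < c
  · filter_upwards [Ioo_mem_nhdsLT hx] with c' hc' using iff_of_true hc'.1 hx
  · filter_upwards [self_mem_nhdsWithin] with c' (hc' : c' < c)
      using iff_of_false (fun h => hx (h.trans hc')) hx

theorem tendsto_stepLeft_nhdsGT (hw : Summable w) (c : I) :
    Tendsto (stepLeft w) (𝓝[>] c) (𝓝 (stepRight w c)) := by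
  refine ((continuous_subtype_val.tendsto c).mono_left nhdsWithin_le_nhds |>.add
    (tendsto_mass hw fun x => ?_)).div_const _
  by_cases hx : x ≤ c
  · filter_upwards [self_mem_nhdsWithin] with c' (hc' : c < c')
      using iff_of_true (hx.trans_lt hc') hx
  · filter_upwards [Ioo_mem_nhdsGT (not_le.1 hx)] with c' hc'
      using iff_of_false (fun h => lt_asymm h hc'.2) hx

theorem staircase_eq (hw0 : 0 ≤ w) (hw : Summable w) {c t : I} (hct : stepLeft w c ≤ t)
    (htc : t ≤ stepRight w c) : staircase w t = c :=
  le_antisymm (sSup_le fun _ hd => le_of_not_gt fun hcd =>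
    (stepRight_lt_stepLeft hw0 hw hcd).not_ge (hd.trans htc)) (le_sSup hct)

theorem stepLeft_staircase_le (hw0 : 0 ≤ w) (hw : Summable w) (t : I) :
    stepLeft w (staircase w t) ≤ t := by
  rcases (bot_le : ⊥ ≤ staircase w t).eq_or_lt with h | h
  · rw [← h]
    exact stepLeft_zero.trans_le t.2.1
  · have := nhdsLT_neBot_of_exists_lt ⟨⊥, h⟩
    refine le_of_tendsto (tendsto_stepLeft_nhdsLT hw _) ?_
    filter_upwards [self_mem_nhdsWithin] with c' (hc' : c' < staircase w t)
    obtain ⟨d, hd, hc'd⟩ := lt_sSup_iff.1 hc'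
    exact (stepLeft_le_stepRight hw0 hw c').trans ((stepRight_lt_stepLeft hw0 hw hc'd).le.trans hd)

theorem le_stepRight_staircase (hw0 : 0 ≤ w) (hw : Summable w) (t : I) :
    (t : ℝ) ≤ stepRight w (staircase w t) := by
  rcases (le_top : staircase w t ≤ ⊤).eq_or_lt with h | h
  · rw [h]
    exact t.2.2.trans_eq (stepRight_one hw0).symm
  · have := nhdsGT_neBot_of_exists_gt ⟨⊤, h⟩
    refine ge_of_tendsto (tendsto_stepLeft_nhdsGT hw _) ?_
    filter_upwards [self_mem_nhdsWithin] with c' (hc' : staircase w t < c')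
    exact (not_le.1 fun hc't => (le_sSup (s := {c | stepLeft w c ≤ t}) hc't).not_gt hc').le

theorem monotone_staircase : Monotone (staircase w) :=
  fun _ _ hst => sSup_le_sSup fun _ hc => le_trans (α := ℝ) hc (Subtype.coe_le_coe.2 hst)

theorem isRepar_staircase (hw0 : 0 ≤ w) (hw : Summable w) : IsRepar (staircase w) :=
  .of_monotone_surjective monotone_staircase fun c =>
    ⟨⟨stepLeft w c, stepLeft_nonneg hw0 c, (stepLeft_le_stepRight hw0 hw c).trans
      (stepRight_le_one hw0 hw c)⟩, staircase_eq hw0 hw le_rfl (stepLeft_le_stepRight hw0 hw c)⟩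

theorem stopValues_staircase (hw0 : 0 ≤ w) (hw : Summable w) :
    StopValues (staircase w) = support w := by
  ext c
  rw [(isRepar_staircase hw0 hw).mem_stopValues_iff_exists, ← stepLeft_lt_stepRight_iff hw0 hw]
  constructor
  · rintro ⟨s, t, hst, rfl, ht⟩
    calc stepLeft w (staircase w s) ≤ s := stepLeft_staircase_le hw0 hw s
      _ < t := hst
      _ ≤ stepRight w (staircase w t) := le_stepRight_staircase hw0 hw t
      _ = stepRight w (staircase w s) := by rw [ht]
  · intro h
    have hL := stepLeft_nonneg hw0 c
    have hR := stepRight_le_one hw0 hw c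
    exact ⟨⟨stepLeft w c, hL, h.le.trans hR⟩, ⟨stepRight w c, hL.trans h.le, hR⟩, h,
      staircase_eq hw0 hw le_rfl h.le, staircase_eq hw0 hw h.le le_rfl⟩

end Staircase

theorem Set.Countable.exists_nonneg_summable_support_eq {α : Type*} {C : Set α}
    (hC : C.Countable) : ∃ w : α → ℝ, 0 ≤ w ∧ Summable w ∧ support w = C := by
  obtain ⟨ε, hε, c, hc, -⟩ := hC.exists_pos_hasSum_le one_pos
  refine ⟨C.indicator ε, indicator_nonneg fun x _ => (hε x).le,
    summable_subtype_iff_indicator.1 hc.summable, ?_⟩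
  rw [support_indicator, support_eq_univ fun x => (hε x).ne', inter_univ]

theorem exists_isRepar_stopValues_eq {C : Set I} (hC : C.Countable) :
    ∃ φ : I → I, IsRepar φ ∧ StopValues φ = C := by
  obtain ⟨w, hw0, hw, rfl⟩ := hC.exists_nonneg_summable_support_eq
  exact ⟨staircase w, isRepar_staircase hw0 hw, stopValues_staircase hw0 hw⟩

/-- The assignment `φ ↦ C_φ` induces an order-preserving bijection from
`Rep₊(I)/Homeo₊(I)` (reparametrizations up to right composition with an
increasing self-homeomorphism of `I`, ordered by right divisibility) onto
the set of countable subsets of `I` ordered by inclusion. Concretely: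
(i) two reparametrizations differ by right composition with an increasing
homeomorphism iff they have the same stop values (well-definedness and
injectivity); (ii) every countable subset of `I` is a stop value set
(surjectivity); (iii) `φ` right-divides `ψ` iff `C_φ ⊆ C_ψ`
(order-preservation both ways). -/
theorem stopValues_induces_orderIso_of_repar_mod_homeo :
    (∀ φ ψ : I → I, IsRepar φ → IsRepar ψ →
      ((∃ ρ : I → I, IsRepar ρ ∧ StrictMono ρ ∧ ψ = φ ∘ ρ) ↔
        StopValues φ = StopValues ψ)) ∧
    (∀ C : Set I, C.Countable → ∃ φ : I → I, IsRepar φ ∧ StopValues φ = C) ∧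
    (∀ φ ψ : I → I, IsRepar φ → IsRepar ψ →
      ((∃ η : I → I, IsRepar η ∧ ψ = φ ∘ η) ↔ StopValues φ ⊆ StopValues ψ)) := by
  refine ⟨fun φ ψ hφ hψ => ⟨?_, fun h => ?_⟩, fun C hC => exists_isRepar_stopValues_eq hC,
    fun φ ψ hφ hψ => ⟨?_, fun h => ?_⟩⟩
  · rintro ⟨ρ, hρ, hρ', rfl⟩
    exact (stopValues_subset_stopValues_comp hφ hρ).antisymm
      (stopValues_comp_subset_of_strictMono hφ hρ hρ')
  · exact ⟨fiberwiseRescale φ ψ, isRepar_fiberwiseRescale hφ hψ h.le,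
      strictMono_fiberwiseRescale hφ hψ h, (comp_fiberwiseRescale hφ hψ h.le).symm⟩
  · rintro ⟨η, hη, rfl⟩
    exact stopValues_subset_stopValues_comp hφ hη
  · exact ⟨fiberwiseRescale φ ψ, isRepar_fiberwiseRescale hφ hψ h,
      (comp_fiberwiseRescale hφ hψ h).symm⟩
end

section
/- Let X be a Hausdorff space, let p : I → X be a regular path and p' : I → X a path with the same endpoints as p, and let φ, φ' : I → I be reparametrizations with p ∘ φ = p' ∘ φ'. Then there exists a reparametrization η : I → I with p ∘ η = p'; moreover, if p is not constant, then η is unique. -/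
open unitInterval

/-- A path `p : I → X` is regular if it is constant on no nondegenerate
closed subinterval of `I`, unless it is constant on all of `I`. -/
def IsRegularPath {X : Type*} (p : I → X) : Prop :=
  (∀ s t : I, p s = p t) ∨ ∀ a b : I, a < b → ¬ ConstOn p a b

section AuxProofs

open Set Filter Topology



local instance fact01 : Fact ((0:ℝ) ≤ 1) := ⟨zero_le_one⟩

lemma repar_ivt {φ : I → I} (hφ : IsRepar φ) {a b u : I} (hab : a ≤ b)
    (h1 : φ a ≤ u) (h2 : u ≤ φ b) : ∃ s, a ≤ s ∧ s ≤ b ∧ φ s = u := by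
  obtain ⟨s, hs, hfs⟩ := intermediate_value_Icc hab hφ.1.continuousOn ⟨h1, h2⟩
  exact ⟨s, hs.1, hs.2, hfs⟩

lemma repar_surj {φ : I → I} (hφ : IsRepar φ) : Function.Surjective φ := by
  intro t
  obtain ⟨s, -, -, hs⟩ := repar_ivt (u := t) hφ (zero_le_one' I)
    (by rw [hφ.2.2.1]; exact nonneg') (by rw [hφ.2.2.2]; exact le_one')
  exact ⟨s, hs⟩

lemma no_cross {X : Type*} [TopologicalSpace X] [T2Space X] {p : I → X} (hp : Continuous p)
    (hne : ∀ a b : I, a < b → ¬ ConstOn p a b)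
    {η₁ η₂ : I → I} (h₁ : IsRepar η₁) (h₂ : IsRepar η₂)
    (hpe : ∀ s, p (η₁ s) = p (η₂ s)) (t₀ : I) : ¬ (η₁ t₀ < η₂ t₀) := by
  intro hlt
  have hEc : IsClosed {s : I | η₁ s = η₂ s} := isClosed_eq h₁.1 h₂.1
  -- greatest coincidence point ≤ t₀
  obtain ⟨a, ⟨ha_eq, ha_le⟩, ha_max⟩ :=
    ((hEc.inter isClosed_Iic).isCompact).exists_isGreatest
      ⟨0, by simp [h₁.2.2.1, h₂.2.2.1, nonneg'], nonneg'⟩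
  -- least coincidence point ≥ t₀
  obtain ⟨b, ⟨hb_eq, hb_le⟩, hb_min⟩ :=
    ((hEc.inter isClosed_Ici).isCompact).exists_isLeast
      ⟨1, by simp [h₁.2.2.2, h₂.2.2.2, le_one'], le_one'⟩
  have hat : a < t₀ := lt_of_le_of_ne ha_le (fun hh => hlt.ne (hh ▸ ha_eq))
  have htb : t₀ < b := lt_of_le_of_ne hb_le (fun hh => hlt.ne (hh ▸ hb_eq))
  have hab : a < b := hat.trans htb
  have hneq : ∀ s, a < s → s < b → η₁ s ≠ η₂ s := by
    intro s hs1 hs2 heq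
    rcases le_total s t₀ with hst | hst
    · exact absurd (ha_max ⟨heq, hst⟩) (not_le.2 hs1)
    · exact absurd (hb_min ⟨heq, hst⟩) (not_le.2 hs2)
  have hslt : ∀ s, a < s → s < b → η₁ s < η₂ s := by
    intro s hs1 hs2
    rcases (hneq s hs1 hs2).lt_or_gt with hl | hl
    · exact hl
    · exfalso
      set g : I → ℝ := fun r => (η₁ r : ℝ) - (η₂ r : ℝ) with hg
      have hgc : Continuous g := (continuous_subtype_val.comp h₁.1).sub
        (continuous_subtype_val.comp h₂.1)
      have hg0 : ∀ r, g r = 0 → η₁ r = η₂ r := by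
        intro r hr
        have : (η₁ r : ℝ) = (η₂ r : ℝ) := by simpa [hg, sub_eq_zero] using hr
        exact Subtype.coe_injective this
      have hgs : 0 < g s := by simp [hg, sub_pos]; exact_mod_cast hl
      have hgt : g t₀ < 0 := by simp [hg, sub_neg]; exact_mod_cast hlt
      rcases le_total s t₀ with hst | hst
      · obtain ⟨r, hr, hgr⟩ := intermediate_value_Icc' hst hgc.continuousOn
          (⟨hgt.le, hgs.le⟩ : (0:ℝ) ∈ Icc (g t₀) (g s))
        exact hneq r (lt_of_lt_of_le hs1 hr.1) (lt_of_le_of_lt hr.2 htb) (hg0 r hgr)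
      · obtain ⟨r, hr, hgr⟩ := intermediate_value_Icc hst hgc.continuousOn
          (⟨hgt.le, hgs.le⟩ : (0:ℝ) ∈ Icc (g t₀) (g s))
        exact hneq r (lt_of_lt_of_le hat hr.1) (lt_of_le_of_lt hr.2 hs2) (hg0 r hgr)
  have hsle : ∀ s, a ≤ s → s ≤ b → η₁ s ≤ η₂ s := by
    intro s hs1 hs2
    rcases eq_or_lt_of_le hs1 with rfl | hs1
    · exact le_of_eq ha_eq
    rcases eq_or_lt_of_le hs2 with rfl | hs2
    · exact le_of_eq hb_eq
    exact (hslt s hs1 hs2).le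
  set c := η₁ a with hc
  set d := η₁ b with hd
  have hc2 : η₂ a = c := ha_eq.symm
  have hd2 : η₂ b = d := hb_eq.symm
  have hcd : c < d := by
    calc c ≤ η₁ t₀ := h₁.2.1 ha_le
    _ < η₂ t₀ := hlt
    _ ≤ η₂ b := h₂.2.1 hb_le
    _ = d := hd2
  -- the one-step construction
  have hstep : ∀ u : I, c ≤ u → u < d →
      ∃ s : I, IsGreatest (Icc a b ∩ {r | η₂ r ≤ u}) s ∧ η₂ s = u ∧ s < b := by
    intro u hcu hud
    obtain ⟨s, hsg⟩ : ∃ s, IsGreatest (Icc a b ∩ {r | η₂ r ≤ u}) s :=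
      ((isClosed_Icc.inter (isClosed_le h₂.1 continuous_const)).isCompact).exists_isGreatest
      ⟨a, ⟨le_refl a, hab.le⟩, show η₂ a ≤ u by rw [hc2]; exact hcu⟩
    have hs2u : η₂ s = u := by
      have hle2 : η₂ s ≤ u := hsg.1.2
      rcases eq_or_lt_of_le hle2 with heq | hlt2
      · exact heq
      · exfalso
        obtain ⟨r, hr1, hr2, hr3⟩ := repar_ivt h₂ hsg.1.1.2 hlt2.le (by rw [hd2]; exact hud.le)
        have : r ≤ s := hsg.2 ⟨⟨hsg.1.1.1.trans hr1, hr2⟩, le_of_eq hr3⟩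
        exact absurd (h₂.2.1 this) (by rw [hr3]; exact not_le.2 hlt2)
    refine ⟨s, hsg, hs2u, lt_of_le_of_ne hsg.1.1.2 fun hh => ?_⟩
    rw [hh, hd2] at hs2u
    exact hud.ne hs2u.symm
  classical
  let sfun : I → I := fun u => if h : c ≤ u ∧ u < d then (hstep u h.1 h.2).choose else a
  have hsfun : ∀ u : I, (c ≤ u ∧ u < d) →
      IsGreatest (Icc a b ∩ {r | η₂ r ≤ u}) (sfun u) ∧ η₂ (sfun u) = u ∧ sfun u < b := by
    intro u h
    simp only [sfun, dif_pos h]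
    exact (hstep u h.1 h.2).choose_spec
  set g : I → I := fun u => η₁ (sfun u) with hgdef
  have key : ∀ u : I, c ≤ u → u < d → p u = p c := by
    intro u₀ hcu hud
    set useq : ℕ → I := fun n => g^[n] u₀ with huseq
    have hsucc : ∀ n, useq (n+1) = η₁ (sfun (useq n)) := fun n =>
      Function.iterate_succ_apply' g n u₀
    have hinv : ∀ n, c ≤ useq n ∧ useq n < d := by
      intro n
      induction n with
      | zero => exact ⟨hcu, hud⟩
      | succ n ih =>
        obtain ⟨hg, he, hlb⟩ := hsfun (useq n) ih
        rw [hsucc n]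
        refine ⟨h₁.2.1 hg.1.1.1, lt_of_le_of_lt ?_ ih.2⟩
        calc η₁ (sfun (useq n)) ≤ η₂ (sfun (useq n)) := hsle _ hg.1.1.1 hg.1.1.2
          _ = useq n := he
    have hdec : ∀ n, useq (n+1) ≤ useq n := by
      intro n
      obtain ⟨hg, he, -⟩ := hsfun (useq n) (hinv n)
      rw [hsucc n]
      exact le_trans (hsle _ hg.1.1.1 hg.1.1.2) he.le
    have hanti : Antitone useq := antitone_nat_of_succ_le hdec
    have hpconst : ∀ n, p (useq n) = p u₀ := by
      intro n
      induction n with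
      | zero => rfl
      | succ n ih => rw [hsucc n, hpe (sfun (useq n)), (hsfun (useq n) (hinv n)).2.1, ih]
    set sseq : ℕ → I := fun n => sfun (useq n) with hsseq
    have hsanti : Antitone sseq := by
      apply antitone_nat_of_succ_le
      intro n
      obtain ⟨hgn, -, -⟩ := hsfun (useq n) (hinv n)
      obtain ⟨hgn1, -, -⟩ := hsfun (useq (n+1)) (hinv (n+1))
      exact hgn.2 ⟨hgn1.1.1, le_trans (hgn1.1.2 : η₂ (sseq (n+1)) ≤ useq (n+1)) (hdec n)⟩
    have hUlim : Tendsto useq atTop (𝓝 (⨅ n, useq n)) :=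
      tendsto_atTop_ciInf hanti (OrderBot.bddBelow _)
    have hSlim : Tendsto sseq atTop (𝓝 (⨅ n, sseq n)) :=
      tendsto_atTop_ciInf hsanti (OrderBot.bddBelow _)
    set U := ⨅ n, useq n with hUdef
    set S := ⨅ n, sseq n with hSdef
    have hη₂S : η₂ S = U := by
      have h1 : Tendsto (fun n => η₂ (sseq n)) atTop (𝓝 (η₂ S)) :=
        (h₂.1.tendsto S).comp hSlim
      have h2 : (fun n => η₂ (sseq n)) = useq := funext fun n => (hsfun _ (hinv n)).2.1
      rw [h2] at h1
      exact tendsto_nhds_unique h1 hUlim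
    have hη₁S : η₁ S = U := by
      have h1 : Tendsto (fun n => η₁ (sseq n)) atTop (𝓝 (η₁ S)) :=
        (h₁.1.tendsto S).comp hSlim
      have h2 : (fun n => η₁ (sseq n)) = fun n => useq (n+1) :=
        funext fun n => (hsucc n).symm
      rw [h2] at h1
      exact tendsto_nhds_unique h1 (hUlim.comp (tendsto_add_atTop_nat 1))
    have hSa : S = a := by
      by_contra hSne
      have haS : a < S :=
        lt_of_le_of_ne (le_ciInf fun n => ((hsfun _ (hinv n)).1).1.1.1) (Ne.symm hSne)
      have hSb : S < b :=
        lt_of_le_of_lt (ciInf_le (OrderBot.bddBelow _) 0) (hsfun _ (hinv 0)).2.2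
      exact hneq S haS hSb (hη₁S.trans hη₂S.symm)
    have hUc : U = c := by rw [← hη₂S, hSa, hc2]
    have hpu : Tendsto (fun n => p (useq n)) atTop (𝓝 (p U)) := (hp.tendsto U).comp hUlim
    have h2 : (fun n => p (useq n)) = fun _ => p u₀ := funext hpconst
    rw [h2] at hpu
    have := tendsto_nhds_unique hpu tendsto_const_nhds
    rw [hUc] at this
    exact this.symm
  obtain ⟨m, hm1, hm2⟩ := exists_between hcd
  apply hne c m hm1
  intro v hv w hw
  rw [key v hv.1 (lt_of_le_of_lt hv.2 hm2), key w hw.1 (lt_of_le_of_lt hw.2 hm2)]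

lemma exists_eta {X : Type*} [TopologicalSpace X] [T2Space X] {p p' : I → X}
    (hp : Continuous p) (hne : ∀ a b : I, a < b → ¬ ConstOn p a b)
    {φ φ' : I → I} (hφ : IsRepar φ) (hφ' : IsRepar φ') (h : p ∘ φ = p' ∘ φ') :
    ∃ η : I → I, IsRepar η ∧ p ∘ η = p' := by
  have W0 : ∀ s₁ s₂ : I, s₁ ≤ s₂ → φ' s₁ = φ' s₂ → φ s₁ = φ s₂ := by
    intro s₁ s₂ hle heq
    rcases eq_or_lt_of_le (hφ.2.1 hle) with heq2 | hlt2
    · exact heq2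
    exfalso
    apply hne (φ s₁) (φ s₂) hlt2
    intro v hv w hw
    obtain ⟨rv, hrv1, hrv2, hrv3⟩ := repar_ivt hφ hle hv.1 hv.2
    obtain ⟨rw', hrw1, hrw2, hrw3⟩ := repar_ivt hφ hle hw.1 hw.2
    have hv' : φ' rv = φ' s₁ :=
      le_antisymm (heq ▸ hφ'.2.1 hrv2) (hφ'.2.1 hrv1)
    have hw' : φ' rw' = φ' s₁ :=
      le_antisymm (heq ▸ hφ'.2.1 hrw2) (hφ'.2.1 hrw1)
    calc p v = p (φ rv) := by rw [hrv3]
      _ = p' (φ' rv) := congrFun h rv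
      _ = p' (φ' rw') := by rw [hv', hw']
      _ = p (φ rw') := (congrFun h rw').symm
      _ = p w := by rw [hrw3]
  have W : ∀ s₁ s₂ : I, φ' s₁ = φ' s₂ → φ s₁ = φ s₂ := by
    intro s₁ s₂ heq
    rcases le_total s₁ s₂ with hle | hle
    · exact W0 s₁ s₂ hle heq
    · exact (W0 s₂ s₁ hle heq.symm).symm
  classical
  set sig : I → I := fun t => (repar_surj hφ' t).choose with hsigdef
  have hsig : ∀ t, φ' (sig t) = t := fun t => (repar_surj hφ' t).choose_spec
  set η : I → I := fun t => φ (sig t) with hηdef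
  have hcomp : p ∘ η = p' := by
    funext t
    calc p (η t) = p' (φ' (sig t)) := congrFun h (sig t)
      _ = p' t := by rw [hsig]
  have hη0 : η 0 = 0 := by
    have : φ (sig 0) = φ 0 := W (sig 0) 0 (by rw [hsig, hφ'.2.2.1])
    rw [show η 0 = φ (sig 0) from rfl, this, hφ.2.2.1]
  have hη1 : η 1 = 1 := by
    have : φ (sig 1) = φ 1 := W (sig 1) 1 (by rw [hsig, hφ'.2.2.2])
    rw [show η 1 = φ (sig 1) from rfl, this, hφ.2.2.2]
  have hmono : Monotone η := by
    intro t t' hle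
    rcases le_total (sig t) (sig t') with hs | hs
    · exact hφ.2.1 hs
    · have ht' : t' ≤ t := by
        rw [← hsig t, ← hsig t']
        exact hφ'.2.1 hs
      have : t = t' := le_antisymm hle ht'
      exact le_of_eq (W (sig t) (sig t') (by rw [hsig, hsig, this]))
  have hsurj : Function.Surjective η := by
    intro u
    obtain ⟨s, hs⟩ := repar_surj hφ u
    refine ⟨φ' s, ?_⟩
    have : φ (sig (φ' s)) = φ s := W (sig (φ' s)) s (hsig _)
    rw [show η (φ' s) = φ (sig (φ' s)) from rfl, this, hs]
  exact ⟨η, ⟨hmono.continuous_of_surjective hsurj, hmono, hη0, hη1⟩, hcomp⟩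


end AuxProofs

/-- Let `p` be a regular path and `p'` a path in a Hausdorff space with the
same endpoints, and let `φ, φ'` be reparametrizations with `p ∘ φ = p' ∘ φ'`.
Then there exists a reparametrization `η` with `p ∘ η = p'`; moreover, if
`p` is not constant, then `η` is unique. -/
theorem exists_repar_factor_through_regular
    {X : Type*} [TopologicalSpace X] [T2Space X]
    (p p' : I → X) (hp : Continuous p) (hp' : Continuous p')
    (hreg : IsRegularPath p) (h0 : p 0 = p' 0) (h1 : p 1 = p' 1)
    (φ φ' : I → I) (hφ : IsRepar φ) (hφ' : IsRepar φ')
    (h : p ∘ φ = p' ∘ φ') :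
    (∃ η : I → I, IsRepar η ∧ p ∘ η = p') ∧
    ((¬ ∀ s t : I, p s = p t) →
      ∀ η₁ η₂ : I → I, IsRepar η₁ → IsRepar η₂ →
        p ∘ η₁ = p' → p ∘ η₂ = p' → η₁ = η₂) := by
  constructor
  · rcases hreg with hconst | hne
    · refine ⟨id, ⟨continuous_id, monotone_id, rfl, rfl⟩, funext fun t => ?_⟩
      obtain ⟨s, hs⟩ := repar_surj hφ' t
      calc p t = p (φ s) := hconst _ _
        _ = p' (φ' s) := congrFun h s
        _ = p' t := by rw [hs]
    · exact exists_eta hp hne hφ hφ' h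
  · intro hnc η₁ η₂ h₁ h₂ he₁ he₂
    have hne : ∀ a b : I, a < b → ¬ ConstOn p a b := by
      rcases hreg with hconst | hne
      · exact absurd hconst hnc
      · exact hne
    have hpe : ∀ s, p (η₁ s) = p (η₂ s) := fun s => by
      rw [show p (η₁ s) = p' s from congrFun he₁ s, show p (η₂ s) = p' s from congrFun he₂ s]
    funext t
    exact le_antisymm
      (not_lt.1 (no_cross hp hne h₂ h₁ (fun s => (hpe s).symm) t))
      (not_lt.1 (no_cross hp hne h₁ h₂ hpe t))
end

section
/- Let X be a Hausdorff space and let p : I → X be a loop-free path, i.e. whenever p(s) = p(t) with s < t, the restriction of p to [s,t] is constant. Then the image p(I) ⊆ X is either a single point or homeomorphic to the unit interval I. -/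
open unitInterval

open Set Topology

/-!
The fibres of a loop-free path are closed subintervals of `I`. For points `q < r` of a countable
dense subset of `I` lying in different fibres, Urysohn's lemma on the compact Hausdorff space
`range p`, followed by a running supremum along `I`, gives a continuous monotone function that is
constant on fibres and jumps from `0` at `q` to `1` at `r`. A convergent weighted sum `G` of all
these functions is continuous, monotone, and has exactly the fibres of `p`; hence `range p` is
homeomorphic to `range G = [G 0, G 1]`, which is a point or an arc.
-/

def IsLoopFree {X : Type*} (p : I → X) : Prop :=
  ∀ s t : I, s < t → p s = p t → ConstOn p s t

section RunningSup

variable {α : Type*} [LinearOrder α] {w : α → ℝ}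

/-- The supremum of `w` on `Iic t`. Indexing by `min s t` keeps the index set fixed, so that
continuity in `t` follows from `IsCompact.continuous_sSup`. -/
noncomputable def runningSup (w : α → ℝ) (t : α) : ℝ := ⨆ s, w (min s t)

theorem runningSup_le {t : α} {b : ℝ} (h : ∀ s ≤ t, w s ≤ b) : runningSup w t ≤ b :=
  have : Nonempty α := ⟨t⟩
  ciSup_le fun s => h _ (min_le_right s t)

variable [TopologicalSpace α] [OrderClosedTopology α] [CompactSpace α]

theorem continuous_runningSup (hw : Continuous w) : Continuous (runningSup w) := by
  have h := isCompact_univ.continuous_sSup (f := fun t s => w (min s t)) (by fun_prop)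
  simp only [image_univ] at h
  exact h

theorem le_runningSup (hw : Continuous w) {s t : α} (hst : s ≤ t) : w s ≤ runningSup w t := by
  have h := le_ciSup (isCompact_range (f := fun s => w (min s t)) (by fun_prop)).bddAbove s
  rw [min_eq_left hst] at h
  exact h

theorem monotone_runningSup (hw : Continuous w) : Monotone (runningSup w) :=
  fun _ _ hst => runningSup_le fun _ hu => le_runningSup hw (hu.trans hst)

theorem runningSup_eq_of_eqOn_Icc (hw : Continuous w) {s t : α} (hst : s ≤ t)
    (hc : ∀ u ∈ Icc s t, w u = w s) : runningSup w t = runningSup w s := by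
  refine le_antisymm (runningSup_le fun u hu => ?_) (monotone_runningSup hw hst)
  rcases le_total u s with hus | hsu
  · exact le_runningSup hw hus
  · exact hc u ⟨hsu, hu⟩ ▸ le_runningSup hw le_rfl

end RunningSup

section WeightedSum

variable {α ι : Type*} {c : ι → ℝ} {f : ι → α → ℝ}

theorem summable_mul_of_mem_Icc (hc : ∀ i, 0 < c i) (hcs : Summable c)
    (hf : ∀ i a, f i a ∈ Icc (0 : ℝ) 1) (a : α) : Summable fun i => c i * f i a :=
  hcs.of_nonneg_of_le (fun i => mul_nonneg (hc i).le (hf i a).1)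
    fun i => mul_le_of_le_one_right (hc i).le (hf i a).2

theorem continuous_tsum_mul_of_mem_Icc [TopologicalSpace α] (hc : ∀ i, 0 < c i)
    (hcs : Summable c) (hf : ∀ i a, f i a ∈ Icc (0 : ℝ) 1) (hfc : ∀ i, Continuous (f i)) :
    Continuous fun a => ∑' i, c i * f i a := by
  refine continuous_tsum (fun i => continuous_const.mul (hfc i)) hcs fun i a => ?_
  rw [Real.norm_eq_abs, abs_of_nonneg (mul_nonneg (hc i).le (hf i a).1)]
  exact mul_le_of_le_one_right (hc i).le (hf i a).2

theorem monotone_tsum_mul_of_mem_Icc [Preorder α] (hc : ∀ i, 0 < c i) (hcs : Summable c)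
    (hf : ∀ i a, f i a ∈ Icc (0 : ℝ) 1) (hfm : ∀ i, Monotone (f i)) :
    Monotone fun a => ∑' i, c i * f i a := fun a b hab =>
  (summable_mul_of_mem_Icc hc hcs hf a).tsum_le_tsum
    (fun i => mul_le_mul_of_nonneg_left (hfm i hab) (hc i).le) (summable_mul_of_mem_Icc hc hcs hf b)

theorem tsum_mul_lt_tsum_mul_of_mem_Icc [Preorder α] (hc : ∀ i, 0 < c i) (hcs : Summable c)
    (hf : ∀ i a, f i a ∈ Icc (0 : ℝ) 1) (hfm : ∀ i, Monotone (f i)) {a b : α} (hab : a ≤ b)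
    (i : ι) (hi : f i a < f i b) : ∑' i, c i * f i a < ∑' i, c i * f i b :=
  Summable.tsum_lt_tsum (i := i) (fun j => mul_le_mul_of_nonneg_left (hfm j hab) (hc j).le)
    (mul_lt_mul_of_pos_left hi (hc i)) (summable_mul_of_mem_Icc hc hcs hf a)
    (summable_mul_of_mem_Icc hc hcs hf b)

end WeightedSum

theorem Dense.exists_lt_ne_of_ne {α X : Type*} [LinearOrder α] [TopologicalSpace α]
    [OrderTopology α] [DenselyOrdered α] [TopologicalSpace X] [T1Space X] {D : Set α}
    (hD : Dense D) {p : α → X} (hp : Continuous p) {s t : α} (hst : s < t) (hne : p s ≠ p t) :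
    ∃ q ∈ D ∩ Ioo s t, ∃ r ∈ D ∩ Ioo s t, q < r ∧ p q ≠ p r := by
  by_contra! hconst
  obtain ⟨q₀, hq₀D, hq₀⟩ := hD.exists_between hst
  have hfib : Ioo s t ∩ D ⊆ p ⁻¹' {p q₀} := by
    intro u ⟨hu, huD⟩
    rcases lt_trichotomy u q₀ with h | rfl | h
    · exact hconst u ⟨huD, hu⟩ q₀ ⟨hq₀D, hq₀⟩ h
    · rfl
    · exact (hconst q₀ ⟨hq₀D, hq₀⟩ u ⟨huD, hu⟩ h).symm
  have hclosed : IsClosed (p ⁻¹' {p q₀}) := isClosed_singleton.preimage hp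
  have hIcc : Icc s t ⊆ p ⁻¹' {p q₀} := closure_Ioo hst.ne ▸ closure_minimal
    ((hD.open_subset_closure_inter isOpen_Ioo).trans (closure_minimal hfib hclosed)) hclosed
  exact hne ((hIcc (left_mem_Icc.2 hst.le)).trans (hIcc (right_mem_Icc.2 hst.le)).symm)

theorem nonempty_homeomorph_range_of_eq_iff {A Y Z : Type*} [TopologicalSpace A]
    [CompactSpace A] [TopologicalSpace Y] [T2Space Y] [TopologicalSpace Z] [T2Space Z]
    {f : A → Y} {g : A → Z} (hf : Continuous f) (hg : Continuous g)
    (hfg : ∀ a b, f a = f b ↔ g a = g b) : Nonempty (range f ≃ₜ range g) := by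
  have : CompactSpace (range f) := isCompact_iff_compactSpace.mp (isCompact_range hf)
  let πf : C(A, range f) := ⟨rangeFactorization f, hf.rangeFactorization⟩
  let πg : C(A, range g) := ⟨rangeFactorization g, hg.rangeFactorization⟩
  have hq : IsQuotientMap πf := (πf.continuous.isClosedMap).isQuotientMap πf.continuous
    rangeFactorization_surjective
  have hfac : Function.FactorsThrough πg πf := fun a b h =>
    Subtype.ext ((hfg a b).1 (congrArg Subtype.val h))
  let φ := hq.lift πg hfac
  have hφ (a : A) : φ (πf a) = πg a := DFunLike.congr_fun (hq.lift_comp πg hfac) a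
  have hφ_inj : Function.Injective φ := by
    rintro ⟨_, a, rfl⟩ ⟨_, b, rfl⟩ h
    exact Subtype.ext ((hfg a b).2 (congrArg Subtype.val ((hφ a).symm.trans (h.trans (hφ b)))))
  have hφ_surj : Function.Surjective φ := by
    rintro ⟨_, a, rfl⟩
    exact ⟨πf a, hφ a⟩
  exact ⟨φ.continuous.homeoOfEquivCompactToT2 (f := Equiv.ofBijective φ ⟨hφ_inj, hφ_surj⟩)⟩

theorem Monotone.range_eq_Icc_of_continuous {G : I → ℝ} (hm : Monotone G) (hc : Continuous G) :
    range G = Icc (G 0) (G 1) :=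
  Subset.antisymm (range_subset_iff.2 fun _ => ⟨hm nonneg', hm le_one'⟩)
    (intermediate_value_univ 0 1 hc)

namespace IsLoopFree

variable {X : Type*} {p : I → X}

theorem eq_of_mem_Icc (hlf : IsLoopFree p) {u v w : I} (huv : p u = p v) (hw : w ∈ Icc u v) :
    p w = p u := by
  rcases (hw.1.trans hw.2).eq_or_lt with rfl | huv'
  · rw [le_antisymm hw.1 hw.2]
  · exact hlf u v huv' huv w hw u ⟨le_rfl, huv'.le⟩

variable [TopologicalSpace X] [T2Space X]

theorem exists_separating (hlf : IsLoopFree p) (hp : Continuous p) {q r : I} (hqr : q < r)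
    (hne : p q ≠ p r) :
    ∃ f : I → ℝ, Continuous f ∧ Monotone f ∧ (∀ t, f t ∈ Icc (0 : ℝ) 1) ∧
      Function.FactorsThrough f p ∧ f q = 0 ∧ f r = 1 := by
  have : CompactSpace (range p) := isCompact_iff_compactSpace.mp (isCompact_range hp)
  set π := rangeFactorization p
  have hπ : Continuous π := hp.rangeFactorization
  have hdisj : Disjoint (π '' Iic q) (π '' Ici r) := by
    refine disjoint_left.2 ?_
    rintro _ ⟨u, hu, rfl⟩ ⟨v, hv, huv⟩
    have huv : p u = p v := (congrArg Subtype.val huv).symm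
    exact hne ((hlf.eq_of_mem_Icc huv ⟨hu, hqr.le.trans hv⟩).trans
      (hlf.eq_of_mem_Icc huv ⟨hu.trans hqr.le, hv⟩).symm)
  obtain ⟨g, hg0, hg1, hg01⟩ := exists_continuous_zero_one_of_isClosed
    ((isClosed_Iic.isCompact.image hπ).isClosed) ((isClosed_Ici.isCompact.image hπ).isClosed) hdisj
  have hw : Continuous (g ∘ π) := g.continuous.comp hπ
  refine ⟨runningSup (g ∘ π), continuous_runningSup hw, monotone_runningSup hw,
    fun t => ⟨(hg01 _).1.trans (le_runningSup hw le_rfl), runningSup_le fun s _ => (hg01 _).2⟩,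
    ?_, ?_, ?_⟩
  · intro s t hst
    wlog hle : s ≤ t generalizing s t
    · exact (this hst.symm (le_of_not_ge hle)).symm
    exact (runningSup_eq_of_eqOn_Icc hw hle fun u hu =>
      congrArg g (Subtype.ext (hlf.eq_of_mem_Icc hst hu))).symm
  · exact le_antisymm (runningSup_le fun s hs => (hg0 ⟨s, hs, rfl⟩).le)
      ((hg01 _).1.trans (le_runningSup hw le_rfl))
  · have hr : (g ∘ π) r = 1 := hg1 ⟨r, mem_Ici.2 le_rfl, rfl⟩
    exact le_antisymm (runningSup_le fun s _ => (hg01 _).2) (hr ▸ le_runningSup hw le_rfl)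

theorem exists_continuous_monotone_eq_iff (hlf : IsLoopFree p) (hp : Continuous p) :
    ∃ G : I → ℝ, Continuous G ∧ Monotone G ∧ ∀ s t, p s = p t ↔ G s = G t := by
  obtain ⟨D, hDc, hD⟩ := TopologicalSpace.exists_countable_dense I
  let S : Set (I × I) := {qr | qr.1 ∈ D ∧ qr.2 ∈ D ∧ qr.1 < qr.2 ∧ p qr.1 ≠ p qr.2}
  have hS : S.Countable := (hDc.prod hDc).mono fun _ h => mem_prod.2 ⟨h.1, h.2.1⟩
  have : Countable S := hS.to_subtype
  choose f hfc hfm hf01 hfp hfq hfr using fun i : S => hlf.exists_separating hp i.2.2.2.1 i.2.2.2.2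
  have : Encodable S := Encodable.ofCountable S
  obtain ⟨c, hc, _, hcs, -⟩ := posSumOfEncodable one_pos S
  have hlt : ∀ s t, s < t → p s ≠ p t → ∑' i, c i * f i s < ∑' i, c i * f i t := by
    intro s t hst hne
    obtain ⟨q, ⟨hqD, hq⟩, r, ⟨hrD, hr⟩, hqr, hpqr⟩ := hD.exists_lt_ne_of_ne hp hst hne
    let i : S := ⟨(q, r), hqD, hrD, hqr, hpqr⟩
    refine tsum_mul_lt_tsum_mul_of_mem_Icc hc hcs.summable hf01 hfm hst.le i ?_
    calc f i s ≤ f i q := hfm i hq.1.le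
      _ < f i r := by rw [hfq, hfr]; exact one_pos
      _ ≤ f i t := hfm i hr.2.le
  refine ⟨_, continuous_tsum_mul_of_mem_Icc hc hcs.summable hf01 hfc,
    monotone_tsum_mul_of_mem_Icc hc hcs.summable hf01 hfm, fun s t => ⟨fun h => ?_, fun h => ?_⟩⟩
  · exact tsum_congr fun i => by rw [hfp i h]
  · by_contra hne
    rcases lt_trichotomy s t with hst | rfl | hts
    · exact (hlt s t hst hne).ne h
    · exact hne rfl
    · exact (hlt t s hts (Ne.symm hne)).ne h.symm

end IsLoopFree

/-- A loop-free path `p : I → X` in a Hausdorff space (whenever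
`p s = p t` with `s < t`, `p` is constant on `[s,t]`) has image either a
single point or homeomorphic to the unit interval `I`. -/
theorem loopFree_path_image_point_or_homeomorphic_unitInterval
    {X : Type*} [TopologicalSpace X] [T2Space X]
    (p : I → X) (hp : Continuous p)
    (hlf : ∀ s t : I, s < t → p s = p t → ConstOn p s t) :
    (∃ x : X, Set.range p = {x}) ∨ Nonempty (Set.range p ≃ₜ I) := by
  obtain ⟨G, hGc, hGm, hpG⟩ := IsLoopFree.exists_continuous_monotone_eq_iff hlf hp
  rcases (hGm (zero_le_one' I)).eq_or_lt with hG01 | hG01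
  · refine Or.inl ⟨p 0, eq_singleton_iff_unique_mem.2 ⟨mem_range_self 0, ?_⟩⟩
    rintro _ ⟨t, rfl⟩
    exact (hpG t 0).2 (le_antisymm (hG01 ▸ hGm le_one') (hGm nonneg'))
  · obtain ⟨e⟩ := nonempty_homeomorph_range_of_eq_iff hp hGc hpG
    exact Or.inr ⟨e.trans ((Homeomorph.setCongr (hGm.range_eq_Icc_of_continuous hGc)).trans
      (iccHomeoI _ _ hG01))⟩
end
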